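/- Let G : ℝ → ℝ be continuous and let x_d ≤ x_u, y_d ≤ y_u with δx = x_u − x_d, δy = y_u − y_d, and assume δx ≤ δy. Then ∫_{x_d}^{x_u} ∫_{y_d}^{y_u} G(x+y) dy dx = ∫_0^{δx} u·G(u + x_d + y_d) du + ∫_{δx}^{δy} δx·G(u + x_d + y_d) du + ∫_{δy}^{δx+δy} (δx + δy − u)·G(u + x_d + y_d) du. -/

import Mathlib

/-!
Let `F` be a primitive of `G` and `H` a primitive of `F`. The inner integral is
`F (x + y_u) - F (x + y_d)`, so the double integral is a second difference of `H` at the four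
corner sums. Each single integral on the right has an affine weight `w`, so `w F - w' H` is a
primitive of its integrand; evaluated at the limits, the three pieces telescope to the same
second difference.
-/

open intervalIntegral

theorem Continuous.exists_forall_hasDerivAt {G : ℝ → ℝ} (hG : Continuous G) :
    ∃ F : ℝ → ℝ, ∀ t, HasDerivAt F (G t) t :=
  ⟨fun t => ∫ s in (0 : ℝ)..t, G s, fun t => (hG.integral_hasStrictDerivAt 0 t).hasDerivAt⟩

section Primitives

variable {G F H : ℝ → ℝ} (hG : Continuous G) (hF : ∀ t, HasDerivAt F (G t) t)
  (hH : ∀ t, HasDerivAt H (F t) t)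

include hG hF hH in
theorem integral_integral_comp_add_eq_of_hasDerivAt (a b c d : ℝ) :
    (∫ x in a..b, ∫ y in c..d, G (x + y))
      = H (b + d) - H (a + d) - (H (b + c) - H (a + c)) := by
  have hFc : Continuous F := Differentiable.continuous fun t => (hF t).differentiableAt
  have inner : ∀ x, (∫ y in c..d, G (x + y)) = F (x + d) - F (x + c) := fun x => by
    rw [integral_comp_add_left G x]
    exact integral_eq_sub_of_hasDerivAt (fun t _ => hF t) (hG.intervalIntegrable _ _)
  rw [integral_congr fun x _ => inner x,
    integral_eq_sub_of_hasDerivAt (f := fun x => H (x + d) - H (x + c))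
      (fun x _ => ((hH (x + d)).comp_add_const x d).sub ((hH (x + c)).comp_add_const x c))
      ((by fun_prop : Continuous fun x => F (x + d) - F (x + c)).intervalIntegrable _ _)]
  ring

include hG hF hH in
theorem integral_mul_comp_add_eq_of_hasDerivAt {w : ℝ → ℝ} {k : ℝ}
    (hw : ∀ u, HasDerivAt w k u) (a p q : ℝ) :
    (∫ u in p..q, w u * G (u + a))
      = (w q * F (q + a) - k * H (q + a)) - (w p * F (p + a) - k * H (p + a)) := by
  have hwc : Continuous w := Differentiable.continuous fun u => (hw u).differentiableAt
  refine integral_eq_sub_of_hasDerivAt (f := fun u => w u * F (u + a) - k * H (u + a))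
    (fun u _ => ?_) ((by fun_prop : Continuous fun u => w u * G (u + a)).intervalIntegrable _ _)
  exact (((hw u).mul ((hF (u + a)).comp_add_const u a)).sub
    (((hH (u + a)).comp_add_const u a).const_mul k)).congr_deriv (by ring)

end Primitives

theorem double_integral_to_single_general (G : ℝ → ℝ) (hG : Continuous G)
    (xd xu yd yu : ℝ) :
    (∫ x in xd..xu, ∫ y in yd..yu, G (x + y))
      = (∫ u in (0:ℝ)..(xu - xd), u * G (u + xd + yd))
        + (∫ u in (xu - xd)..(yu - yd), (xu - xd) * G (u + xd + yd))
        + (∫ u in (yu - yd)..(xu - xd + (yu - yd)),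
            (xu - xd + (yu - yd) - u) * G (u + xd + yd)) := by
  obtain ⟨F, hF⟩ := hG.exists_forall_hasDerivAt
  have hFc : Continuous F := Differentiable.continuous fun t => (hF t).differentiableAt
  obtain ⟨H, hH⟩ := hFc.exists_forall_hasDerivAt
  simp only [add_assoc _ xd yd]
  rw [integral_integral_comp_add_eq_of_hasDerivAt hG hF hH,
    integral_mul_comp_add_eq_of_hasDerivAt hG hF hH hasDerivAt_id',
    integral_mul_comp_add_eq_of_hasDerivAt hG hF hH (hasDerivAt_const · (xu - xd)),
    integral_mul_comp_add_eq_of_hasDerivAt hG hF hH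
      (fun u => (hasDerivAt_id' u).const_sub (xu - xd + (yu - yd)))]
  ring_nf

/-- Reduction of the double integral of `G(x+y)` over a rectangle to three single integrals
(equation (13) of the paper, with corrected integration limits). -/
theorem double_integral_to_single (G : ℝ → ℝ) (hG : Continuous G)
    (xd xu yd yu : ℝ) (hx : xd ≤ xu) (hy : yd ≤ yu)
    (h : xu - xd ≤ yu - yd) :
    (∫ x in xd..xu, ∫ y in yd..yu, G (x + y))
      = (∫ u in (0:ℝ)..(xu - xd), u * G (u + xd + yd))
        + (∫ u in (xu - xd)..(yu - yd), (xu - xd) * G (u + xd + yd))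
        + (∫ u in (yu - yd)..(xu - xd + (yu - yd)),
            (xu - xd + (yu - yd) - u) * G (u + xd + yd)) :=
  double_integral_to_single_general G hG xd xu yd yu
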